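/- For every n ≥ 1 and every λ_1 with 1 ≤ λ_1 ≤ n, the hook partition (λ_1, 1^{n−λ_1}) satisfies η_{(λ_1,1^{n−λ_1})} = (−1)^n·(1 + (−1)^{λ_1}·n·D_{λ_1−1}) = (−1)^{n−λ_1}·(D_{λ_1} + (n−λ_1)·D_{λ_1−1}). In particular, η_{(n−1,1)} = −(D_{n−1} + D_{n−2}) for n ≥ 2. -/

import Mathlib

/-!
Removing the hook of `(a, 1^k)` leaves `∅` and deleting its first column leaves the one-row
partition `(a - 1)`, so Renteln's recursion expresses `η_{(a,1^k)}` through `η_{(a-1)}` alone.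
For one-row partitions the recursion reads `η_{(m+1)} = (m + 1) η_{(m)} + (-1)^(m+1)`, the
derangement recurrence, hence `η_{(m)} = D_m`. The second form of the hook formula is the first
one rewritten with `D_a = a D_{a-1} + (-1)^a`.
-/

/-- Derangement numbers: `D 0 = 1`, `D (m+1) = (m+1) * D m + (-1)^(m+1)`. -/
def derange : ℕ → ℤ
  | 0 => 1
  | n + 1 => (n + 1 : ℤ) * derange n + (-1) ^ (n + 1)

/-- Subtract one from every part and discard the parts that become zero
(deleting the first column of the Ferrers diagram). -/
def strip (l : List ℕ) : List ℕ := (l.map (· - 1)).filter (fun x => 0 < x)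

lemma strip_measure (l : List ℕ) : (strip l).sum + (strip l).length ≤ l.sum := by
  induction l with
  | nil => simp [strip]
  | cons x t ih =>
      simp only [strip, List.map_cons, List.filter_cons] at ih ⊢
      by_cases hx : 0 < x - 1 <;> simp [hx] <;> omega

/-- The eigenvalues of the derangement graph, defined by Renteln's recurrence:
`η ∅ = 1` and `η λ = (-1)^h (η (λ-ĥ) + (-1)^{λ₁} h η (λ-ĉ))`, where
`h = λ₁ + r - 1` is the hook size, `λ-ĥ = strip (tail λ)` removes the hook,
and `λ-ĉ = strip λ` removes the first column. -/
def eta : List ℕ → ℤ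
  | [] => 1
  | a :: t =>
      (-1) ^ (a + t.length) *
        (eta (strip t) + (-1) ^ a * ((a : ℤ) + t.length) * eta (strip (a :: t)))
  termination_by l => l.sum + l.length
  decreasing_by
  · have h1 := strip_measure t
    simp only [List.sum_cons, List.length_cons]
    omega
  · have h1 := strip_measure (a :: t)
    simp only [List.sum_cons, List.length_cons] at h1 ⊢
    omega

/-- `l` is (the list of parts of) a partition of `n`: weakly decreasing,
all parts positive, summing to `n`. -/
def IsPartition (n : ℕ) (l : List ℕ) : Prop :=
  l.Pairwise (· ≥ ·) ∧ (∀ x ∈ l, 0 < x) ∧ l.sum = n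

/-- The hook partition `(a, 1^(n-a))` of `n`. -/
def hookP (n a : ℕ) : List ℕ := a :: List.replicate (n - a) 1

lemma strip_append (l₁ l₂ : List ℕ) : strip (l₁ ++ l₂) = strip l₁ ++ strip l₂ := by
  simp only [strip, List.map_append, List.filter_append]

lemma strip_replicate_one (k : ℕ) : strip (List.replicate k 1) = [] := by
  simp [strip, List.map_replicate]

lemma strip_nil : strip [] = [] := rfl

lemma eta_nil : eta [] = 1 := by
  rw [eta]

lemma eta_cons (a : ℕ) (t : List ℕ) : eta (a :: t) =
    (-1) ^ (a + t.length) *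
      (eta (strip t) + (-1) ^ a * ((a : ℤ) + t.length) * eta (strip (a :: t))) := by
  rw [eta]

-- For `m = 0` this uses that the recursion also gives `eta [0] = 1 = eta []`.
lemma eta_strip_singleton_succ (m : ℕ) : eta (strip [m + 1]) = eta [m] := by
  rcases m with _ | m
  · simp [strip, eta_cons, eta_nil]
  · simp [strip]

lemma eta_singleton (m : ℕ) : eta [m] = derange m := by
  induction m with
  | zero => simp [eta_cons, strip_nil, eta_nil, derange]
  | succ m ih =>
    have hsq : (-1 : ℤ) ^ (m + 1) * (-1) ^ (m + 1) = 1 := pow_mul_pow_eq_one _ (by norm_num)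
    rw [eta_cons, eta_strip_singleton_succ, ih, derange, strip_nil, eta_nil, List.length_nil]
    push_cast
    linear_combination ((m : ℤ) + 1) * derange m * hsq

lemma eta_hook (a k : ℕ) :
    eta ((a + 1) :: List.replicate k 1) =
      (-1) ^ (a + 1 + k) * (1 + (-1) ^ (a + 1) * ((a + 1 + k : ℕ) : ℤ) * derange a) := by
  rw [eta_cons, strip_replicate_one, List.length_replicate,
    ← List.singleton_append, strip_append, strip_replicate_one, List.append_nil,
    eta_strip_singleton_succ, eta_singleton, eta_nil]
  push_cast
  ring

theorem eta_hookP (n a : ℕ) (ha : 1 ≤ a) (han : a ≤ n) :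
    eta (hookP n a) = (-1) ^ n * (1 + (-1) ^ a * (n : ℤ) * derange (a - 1)) := by
  obtain ⟨b, rfl⟩ := Nat.exists_eq_add_of_le' ha
  obtain ⟨k, rfl⟩ := Nat.exists_eq_add_of_le han
  rw [hookP, Nat.add_sub_cancel_left, eta_hook, Nat.add_sub_cancel]

theorem eta_hookP_eq_derange (n a : ℕ) (ha : 1 ≤ a) (han : a ≤ n) :
    eta (hookP n a) = (-1) ^ (n - a) * (derange a + ((n - a : ℕ) : ℤ) * derange (a - 1)) := by
  obtain ⟨b, rfl⟩ := Nat.exists_eq_add_of_le' ha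
  obtain ⟨k, rfl⟩ := Nat.exists_eq_add_of_le han
  have hsq : (-1 : ℤ) ^ (b + 1) * (-1) ^ (b + 1) = 1 := pow_mul_pow_eq_one _ (by norm_num)
  rw [eta_hookP _ _ ha han, Nat.add_sub_cancel_left, Nat.add_sub_cancel, derange, pow_add]
  push_cast
  linear_combination (-1 : ℤ) ^ k * (b + 1 + k) * derange b * hsq

theorem eta_hook_formula_general (n a : ℕ) (ha : 1 ≤ a) (han : a ≤ n) :
    eta (hookP n a) = (-1) ^ n * (1 + (-1) ^ a * (n : ℤ) * derange (a - 1)) ∧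
    eta (hookP n a) =
      (-1) ^ (n - a) * (derange a + ((n - a : ℕ) : ℤ) * derange (a - 1)) ∧
    (2 ≤ n → eta (hookP n (n - 1)) = -(derange (n - 1) + derange (n - 2))) := by
  refine ⟨eta_hookP n a ha han, eta_hookP_eq_derange n a ha han, fun hn => ?_⟩
  rw [eta_hookP_eq_derange n (n - 1) (by omega) (by omega),
    show n - (n - 1) = 1 by omega, show n - 1 - 1 = n - 2 by omega]
  push_cast
  ring

/-- Hook eigenvalues: for `1 ≤ a ≤ n`,
`η_{(a,1^{n-a})} = (-1)^n (1 + (-1)^a n D_{a-1}) = (-1)^{n-a}(D_a + (n-a) D_{a-1})`;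
in particular `η_{(n-1,1)} = -(D_{n-1} + D_{n-2})` for `n ≥ 2`. -/
theorem eta_hook_formula (n a : ℕ) (hn : 1 ≤ n) (ha : 1 ≤ a) (han : a ≤ n) :
    eta (hookP n a) = (-1) ^ n * (1 + (-1) ^ a * (n : ℤ) * derange (a - 1)) ∧
    eta (hookP n a) =
      (-1) ^ (n - a) * (derange a + ((n - a : ℕ) : ℤ) * derange (a - 1)) ∧
    (2 ≤ n → eta (hookP n (n - 1)) = -(derange (n - 1) + derange (n - 2))) :=
  eta_hook_formula_general n a ha han
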